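/- Limits of right q-deformed rationals at irrational points: let 0 < q < 1 and let t be an irrational real number. If (x_m) is any sequence of rational numbers converging to t, then the sequence ([x_m]♯_q) converges in ℝ. Moreover, the limit is uniquely determined by t: if (y_m) is another sequence of rationals converging to the same t, then lim [x_m]♯_q = lim [y_m]♯_q. -/

import Mathlib

open Matrix Filter

/-- The q-deformed generator σ₁(q) = [[q⁻¹, −q⁻¹], [0, 1]]. -/
noncomputable def sig1 (q : ℝ) : Matrix (Fin 2) (Fin 2) ℝ := !![q⁻¹, -q⁻¹; 0, 1]

/-- The q-deformed generator σ₂(q) = [[1, 0], [1, q⁻¹]]. -/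
noncomputable def sig2 (q : ℝ) : Matrix (Fin 2) (Fin 2) ℝ := !![1, 0; 1, q⁻¹]

/-- `betaMat q a k` is the product of the first `k` alternating factors
`σ₁(q)^{-a 1} · σ₂(q)^{a 2} · σ₁(q)^{-a 3} ⋯` (indices start at 1). -/
noncomputable def betaMat (q : ℝ) (a : ℕ → ℤ) : ℕ → Matrix (Fin 2) (Fin 2) ℝ
  | 0 => 1
  | k + 1 => betaMat q a k *
      (if (k + 1) % 2 = 1 then sig1 q ^ (-(a (k + 1))) else sig2 q ^ (a (k + 1)))

/-- Möbius action of a 2×2 real matrix on a real number: z ↦ (Az + B)/(Cz + D). -/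
noncomputable def mobiusAct (M : Matrix (Fin 2) (Fin 2) ℝ) (z : ℝ) : ℝ :=
  (M 0 0 * z + M 0 1) / (M 1 0 * z + M 1 1)

/-- Möbius image of ∞ under a 2×2 real matrix: ∞ ↦ A/C. -/
noncomputable def mobiusInf (M : Matrix (Fin 2) (Fin 2) ℝ) : ℝ := M 0 0 / M 1 0

/-- `a` (on indices 1,…,2n) is an even continued form: either `a₁ ≥ 0` and `aᵢ ≥ 1` for
`2 ≤ i ≤ 2n`, or `a₁ ≤ 0` and `aᵢ ≤ −1` for `2 ≤ i ≤ 2n`. -/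
def IsEvenForm (n : ℕ) (a : ℕ → ℤ) : Prop :=
  1 ≤ n ∧ ((0 ≤ a 1 ∧ ∀ i, 2 ≤ i → i ≤ 2 * n → 1 ≤ a i)
    ∨ (a 1 ≤ 0 ∧ ∀ i, 2 ≤ i → i ≤ 2 * n → a i ≤ -1))

/-- Value of the continued fraction `a i + 1/(a (i+1) + 1/(⋯ + 1/(a last)))`. -/
def cfVal (a : ℕ → ℤ) (last i : ℕ) : ℚ :=
  if last ≤ i then (a i : ℚ)
  else (a i : ℚ) + 1 / cfVal a last (i + 1)
termination_by last - i
decreasing_by omega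

/-- `a` (on indices 1,…,2n) is the even continued fraction expansion of the rational `x`:
for `x ≠ 0` it is an even continued form of value `x`; by convention the expansion of `0`
is `(−1, 1)`. -/
def IsECFExp (n : ℕ) (a : ℕ → ℤ) (x : ℚ) : Prop :=
  (x ≠ 0 ∧ IsEvenForm n a ∧ cfVal a (2 * n) 1 = x) ∨
  (x = 0 ∧ n = 1 ∧ a 1 = -1 ∧ a 2 = 1)

/-- The right q-deformation attached to expansion data `(n, a)`:
the image of ∞ under the Möbius transformation of β(a, q). -/
noncomputable def sharpVal (q : ℝ) (n : ℕ) (a : ℕ → ℤ) : ℝ :=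
  mobiusInf (betaMat q a (2 * n))

/-- The left q-deformation attached to expansion data `(n, a)`:
the image of 1/(1−q) under the Möbius transformation of β(a, q). -/
noncomputable def flatVal (q : ℝ) (n : ℕ) (a : ℕ → ℤ) : ℝ :=
  mobiusAct (betaMat q a (2 * n)) (1 / (1 - q))

/-!
For `x > 0` the even continued fraction `(a₁, …, a₂ₙ)` of `x` has `a₁ ≥ 0` and all other digits
`≥ 1`, and `β(a, q)` is the product of the pair matrices `σ₁(q)^{-a₂ᵢ₋₁} σ₂(q)^{a₂ᵢ}`, which have
nonnegative entries; for `x < 0` the same holds after conjugating by `diag(1, -1)`. Rationals close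
to the irrational `t` share a long prefix of digits with the regular continued fraction of `t`, so
`[x]♯_q` is the image of `∞` under `P_k R`, where `P_k` is a product of `k` pair matrices depending
only on `t` and `R` is nonnegative. Pair matrices with digits `≥ 1` have cross-ratio at most
`1 + 1/q`, so by Birkhoff's contraction the intervals `P_k [0, ∞]` are nested with geometrically
decreasing lengths; their common point is the limit.
-/

open Topology

def nonnegPosDiag : Submonoid (Matrix (Fin 2) (Fin 2) ℝ) where
  carrier := {M | (∀ i j, 0 ≤ M i j) ∧ 0 < M 0 0 ∧ 0 < M 1 1}
  one_mem' := ⟨fun i j => by rw [one_apply]; split_ifs <;> norm_num, by simp, by simp⟩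
  mul_mem' := by
    rintro M N ⟨hM, hM00, hM11⟩ ⟨hN, hN00, hN11⟩
    refine ⟨fun i j => ?_, ?_, ?_⟩ <;> simp only [mul_apply, Fin.sum_univ_two]
    · have := hM i 0; have := hM i 1; have := hN 0 j; have := hN 1 j; positivity
    · exact add_pos_of_pos_of_nonneg (mul_pos hM00 hN00) (mul_nonneg (hM 0 1) (hN 1 0))
    · exact add_pos_of_nonneg_of_pos (mul_nonneg (hM 1 0) (hN 0 1)) (mul_pos hM11 hN11)

/-- For `M 1 0, M 1 1 > 0` this is the length of the Möbius image of `[0, ∞]`, the interval with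
endpoints `M 0 1 / M 1 1` and `M 0 0 / M 1 0`. -/
noncomputable def mobiusWidth (M : Matrix (Fin 2) (Fin 2) ℝ) : ℝ := |M.det| / (M 1 0 * M 1 1)

def CrossRatioLE (K : ℝ) (M : Matrix (Fin 2) (Fin 2) ℝ) : Prop :=
  M 0 0 * M 1 1 ≤ K * (M 0 1 * M 1 0) ∧ M 0 1 * M 1 0 ≤ K * (M 0 0 * M 1 1)

lemma CrossRatioLE.abs_det_le {K : ℝ} {M : Matrix (Fin 2) (Fin 2) ℝ} (hK : 0 < K + 1)
    (hM : CrossRatioLE K M) :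
    |M.det| ≤ (K - 1) / (K + 1) * (M 0 0 * M 1 1 + M 0 1 * M 1 0) := by
  obtain ⟨h₁, h₂⟩ := hM
  rw [det_fin_two, abs_sub_le_iff, div_mul_eq_mul_div, le_div_iff₀ hK, le_div_iff₀ hK]
  constructor <;> nlinarith

namespace nonnegPosDiag

variable {A B : Matrix (Fin 2) (Fin 2) ℝ}

lemma mul_apply_one_zero_pos (hA : A ∈ nonnegPosDiag) (hB : B ∈ nonnegPosDiag)
    (hB10 : 0 < B 1 0) : 0 < (A * B) 1 0 := by
  simp only [mul_apply, Fin.sum_univ_two]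
  exact add_pos_of_nonneg_of_pos (mul_nonneg (hA.1 1 0) (hB.1 0 0)) (mul_pos hA.2.2 hB10)

/-- `(A * B) ∞` is a weighted mediant of the endpoints `A ∞` and `A 0`. -/
lemma abs_mobiusInf_mul_sub_le (hA : A ∈ nonnegPosDiag) (hA10 : 0 < A 1 0)
    (hB : B ∈ nonnegPosDiag) : |mobiusInf (A * B) - mobiusInf A| ≤ mobiusWidth A := by
  obtain ⟨-, -, hA11⟩ := hA
  obtain ⟨hBnn, hB00, -⟩ := hB
  have hden : 0 < A 1 0 * B 0 0 + A 1 1 * B 1 0 :=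
    add_pos_of_pos_of_nonneg (mul_pos hA10 hB00) (mul_nonneg hA11.le (hBnn 1 0))
  have key : mobiusInf (A * B) - mobiusInf A
      = -(B 1 0 * A.det) / ((A 1 0 * B 0 0 + A 1 1 * B 1 0) * A 1 0) := by
    simp only [mobiusInf, mul_apply, Fin.sum_univ_two, det_fin_two]
    rw [div_sub_div _ _ hden.ne' hA10.ne']
    ring
  rw [key, mobiusWidth, abs_div, abs_neg, abs_mul, abs_of_nonneg (hBnn 1 0),
    abs_of_pos (mul_pos hden hA10), div_le_div_iff₀ (mul_pos hden hA10) (mul_pos hA10 hA11)]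
  have : B 1 0 * A 1 1 ≤ A 1 0 * B 0 0 + A 1 1 * B 1 0 := by nlinarith [mul_pos hA10 hB00]
  calc B 1 0 * |A.det| * (A 1 0 * A 1 1) = |A.det| * A 1 0 * (B 1 0 * A 1 1) := by ring
    _ ≤ |A.det| * A 1 0 * (A 1 0 * B 0 0 + A 1 1 * B 1 0) := by gcongr
    _ = |A.det| * ((A 1 0 * B 0 0 + A 1 1 * B 1 0) * A 1 0) := by ring

/-- Birkhoff's contraction estimate, in its simplest form. -/
lemma mobiusWidth_mul_le {K : ℝ} (hA : A ∈ nonnegPosDiag) (hA10 : 0 < A 1 0)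
    (hB : B ∈ nonnegPosDiag) (hB10 : 0 < B 1 0) (hK : 1 < K) (hBK : CrossRatioLE K B) :
    mobiusWidth (A * B) ≤ (K - 1) / (K + 1) * mobiusWidth A := by
  have hAB10 : 0 < (A * B) 1 0 := mul_apply_one_zero_pos hA hB hB10
  have hAB11 : 0 < (A * B) 1 1 := (mul_mem hA hB).2.2
  have hρ : 0 ≤ (K - 1) / (K + 1) := div_nonneg (by linarith) (by linarith)
  obtain ⟨-, -, hA11⟩ := hA
  obtain ⟨hBnn, hB00, hB11⟩ := hB
  have hden : A 1 0 * A 1 1 * (B 0 0 * B 1 1 + B 0 1 * B 1 0) ≤ (A * B) 1 0 * (A * B) 1 1 := by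
    simp only [mul_apply, Fin.sum_univ_two]
    nlinarith [mul_nonneg (mul_nonneg (sq_nonneg (A 1 0)) hB00.le) (hBnn 0 1),
      mul_nonneg (mul_nonneg (sq_nonneg (A 1 1)) (hBnn 1 0)) hB11.le]
  rw [mobiusWidth, mobiusWidth, det_mul, abs_mul, mul_div_assoc',
    div_le_div_iff₀ (mul_pos hAB10 hAB11) (mul_pos hA10 hA11)]
  calc |A.det| * |B.det| * (A 1 0 * A 1 1)
      ≤ |A.det| * ((K - 1) / (K + 1) * (B 0 0 * B 1 1 + B 0 1 * B 1 0)) * (A 1 0 * A 1 1) := by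
        gcongr
        exact hBK.abs_det_le (by linarith)
    _ = (K - 1) / (K + 1) * |A.det| * (A 1 0 * A 1 1 * (B 0 0 * B 1 1 + B 0 1 * B 1 0)) := by
        ring
    _ ≤ (K - 1) / (K + 1) * |A.det| * ((A * B) 1 0 * (A * B) 1 1) := by gcongr

end nonnegPosDiag

/-- The images of `[0, ∞]` under the partial products are nested intervals whose lengths decrease
geometrically by `mobiusWidth_mul_le`. -/
theorem exists_abs_mobiusInf_prod_mul_sub_le {K : ℝ} (hK : 1 < K)
    {P : ℕ → Matrix (Fin 2) (Fin 2) ℝ} (hP : ∀ i, P i ∈ nonnegPosDiag)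
    (hP10 : ∀ i, 0 < P i 1 0) (hPK : ∀ i, 1 ≤ i → CrossRatioLE K (P i)) :
    ∃ L C : ℝ, ∀ j, ∀ R ∈ nonnegPosDiag,
      |mobiusInf (((List.range (j + 1)).map P).prod * R) - L| ≤ C * ((K - 1) / (K + 1)) ^ j := by
  set ρ := (K - 1) / (K + 1)
  have hρ0 : 0 ≤ ρ := div_nonneg (by linarith) (by linarith)
  have hρ1 : ρ < 1 := (div_lt_one (by linarith)).2 (by linarith)
  have hprod (j : ℕ) : ((List.range j).map P).prod ∈ nonnegPosDiag :=
    nonnegPosDiag.list_prod_mem (by simpa using fun i _ => hP i)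
  set Q : ℕ → Matrix (Fin 2) (Fin 2) ℝ := fun j => ((List.range (j + 1)).map P).prod
  have hQ_succ (j : ℕ) : Q (j + 1) = Q j * P (j + 1) := List.prod_range_succ P (j + 1)
  have hQ10 (j : ℕ) : 0 < Q j 1 0 := by
    rw [show Q j = ((List.range j).map P).prod * P j from List.prod_range_succ P j]
    exact nonnegPosDiag.mul_apply_one_zero_pos (hprod j) (hP j) (hP10 j)
  set W := mobiusWidth (Q 0)
  have hW (j : ℕ) : mobiusWidth (Q j) ≤ W * ρ ^ j := by
    induction j with
    | zero => simp [W]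
    | succ j ih =>
      calc mobiusWidth (Q (j + 1)) ≤ ρ * mobiusWidth (Q j) := by
            rw [hQ_succ]
            exact nonnegPosDiag.mobiusWidth_mul_le (hprod _) (hQ10 j) (hP _) (hP10 _) hK
              (hPK _ le_add_self)
        _ ≤ ρ * (W * ρ ^ j) := by gcongr
        _ = W * ρ ^ (j + 1) := by ring
  have hmed (j : ℕ) (R : Matrix (Fin 2) (Fin 2) ℝ) (hR : R ∈ nonnegPosDiag) :
      |mobiusInf (Q j * R) - mobiusInf (Q j)| ≤ W * ρ ^ j :=
    (nonnegPosDiag.abs_mobiusInf_mul_sub_le (hprod _) (hQ10 j) hR).trans (hW j)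
  have hdist (j : ℕ) : dist (mobiusInf (Q j)) (mobiusInf (Q (j + 1))) ≤ W * ρ ^ j := by
    rw [dist_comm, Real.dist_eq, hQ_succ]
    exact hmed j _ (hP _)
  obtain ⟨L, hL⟩ := cauchySeq_tendsto_of_complete (cauchySeq_of_le_geometric _ _ hρ1 hdist)
  refine ⟨L, W + W / (1 - ρ), fun j R hR => ?_⟩
  have hlim := dist_le_of_le_geometric_of_tendsto _ _ hρ1 hdist hL j
  rw [Real.dist_eq] at hlim
  calc |mobiusInf (Q j * R) - L|
      ≤ |mobiusInf (Q j * R) - mobiusInf (Q j)| + |mobiusInf (Q j) - L| := abs_sub_le _ _ _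
    _ ≤ W * ρ ^ j + W * ρ ^ j / (1 - ρ) := add_le_add (hmed j R hR) hlim
    _ = (W + W / (1 - ρ)) * ρ ^ j := by ring

section pairProd

variable {α : Type*} [Monoid α]

def pairProd (M : ℕ → ℕ → α) (e : ℕ → ℕ) (n : ℕ) : α :=
  ((List.range n).map fun i => M (e (2 * i + 1)) (e (2 * i + 2))).prod

lemma pairProd_succ (M : ℕ → ℕ → α) (e : ℕ → ℕ) (n : ℕ) :
    pairProd M e (n + 1) = pairProd M e n * M (e (2 * n + 1)) (e (2 * n + 2)) :=
  List.prod_range_succ _ n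

lemma pairProd_add (M : ℕ → ℕ → α) (e : ℕ → ℕ) (j l : ℕ) :
    pairProd M e (j + l) = pairProd M e j * pairProd M (fun i => e (2 * j + i)) l := by
  simp only [pairProd, List.range_add, List.map_append, List.prod_append, List.map_map]
  congr 3
  funext i
  simp only [Function.comp_apply, mul_add, add_assoc]

lemma pairProd_congr (M : ℕ → ℕ → α) {e e' : ℕ → ℕ} {n : ℕ}
    (h : ∀ i, 1 ≤ i → i ≤ 2 * n → e i = e' i) : pairProd M e n = pairProd M e' n := by
  refine congrArg List.prod (List.map_congr_left fun i hi => ?_)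
  rw [List.mem_range] at hi
  rw [h (2 * i + 1) (by omega) (by omega), h (2 * i + 2) (by omega) (by omega)]

lemma pairProd_mem {S : Submonoid α} {M : ℕ → ℕ → α} (hM : ∀ b c, M b c ∈ S) (e : ℕ → ℕ)
    (n : ℕ) : pairProd M e n ∈ S :=
  S.list_prod_mem (by simpa using fun i _ => hM _ _)

end pairProd

/-- `M b c` plays the role of `σ₁(q)^{-b} σ₂(q)^c`; the cross-ratio bound is only required for
`b ≥ 1` because the first digit of an expansion may vanish. -/
structure IsContractingFamily (K : ℝ) (M : ℕ → ℕ → Matrix (Fin 2) (Fin 2) ℝ) : Prop where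
  mem : ∀ b c, M b c ∈ nonnegPosDiag
  apply_one_zero_pos : ∀ b c, 1 ≤ c → 0 < M b c 1 0
  crossRatioLE : ∀ b c, 1 ≤ b → 1 ≤ c → CrossRatioLE K (M b c)

theorem IsContractingFamily.exists_tendsto_mobiusInf_pairProd {K : ℝ}
    {M : ℕ → ℕ → Matrix (Fin 2) (Fin 2) ℝ} (hM : IsContractingFamily K M) (hK : 1 < K)
    {d : ℕ → ℕ} (hd : ∀ i, 2 ≤ i → 1 ≤ d i) :
    ∃ L, ∀ (e : ℕ → ℕ → ℕ) (N : ℕ → ℕ),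
      (∀ k, ∀ᶠ m in atTop, k ≤ N m ∧ ∀ i, 1 ≤ i → i ≤ 2 * k → e m i = d i) →
      Tendsto (fun m => mobiusInf (pairProd M (e m) (N m))) atTop (𝓝 L) := by
  obtain ⟨L, C, hLC⟩ := exists_abs_mobiusInf_prod_mul_sub_le hK
    (P := fun i => M (d (2 * i + 1)) (d (2 * i + 2))) (fun _ => hM.mem _ _)
    (fun _ => hM.apply_one_zero_pos _ _ (hd _ (by omega)))
    (fun _ hi => hM.crossRatioLE _ _ (hd _ (by omega)) (hd _ (by omega)))
  refine ⟨L, fun e N he => Metric.tendsto_nhds.2 fun ε hε => ?_⟩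
  have hρ : Tendsto (fun j => C * ((K - 1) / (K + 1)) ^ j) atTop (𝓝 0) := by
    simpa using (tendsto_pow_atTop_nhds_zero_of_lt_one (div_nonneg (by linarith) (by linarith))
      ((div_lt_one (by linarith)).2 (by linarith))).const_mul C
  obtain ⟨j, hj⟩ := (hρ.eventually (gt_mem_nhds hε)).exists
  filter_upwards [he (j + 1)] with m ⟨hN, hagree⟩
  rw [Real.dist_eq, show N m = j + 1 + (N m - (j + 1)) by omega, pairProd_add,
    pairProd_congr M hagree]
  exact (hLC j _ (pairProd_mem hM.mem _ _)).trans_lt hj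

section Triangular

variable {R : Type*} [CommRing R]

lemma upper_pow (α β : R) (b : ℕ) :
    !![α, β; 0, 1] ^ b = !![α ^ b, β * ∑ i ∈ Finset.range b, α ^ i; 0, 1] := by
  induction b with
  | zero => simp [one_fin_two]
  | succ b ih =>
    rw [pow_succ, ih, mul_fin_two, Finset.sum_range_succ]
    ext i j
    fin_cases i <;> fin_cases j <;> simp [pow_succ, mul_add, mul_comm, add_comm]

lemma lower_pow (γ δ : R) (c : ℕ) :
    !![1, 0; γ, δ] ^ c = !![1, 0; γ * ∑ i ∈ Finset.range c, δ ^ i, δ ^ c] := by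
  induction c with
  | zero => simp [one_fin_two]
  | succ c ih =>
    rw [pow_succ, ih, mul_fin_two, Finset.sum_range_succ]
    ext i j
    fin_cases i <;> fin_cases j <;> simp [pow_succ, mul_add, mul_comm, add_comm]

end Triangular

lemma one_le_geom_sum {x : ℝ} (hx : 0 ≤ x) {n : ℕ} (hn : 1 ≤ n) :
    1 ≤ ∑ i ∈ Finset.range n, x ^ i := by
  simpa using Finset.single_le_sum (fun i _ => pow_nonneg hx i) (Finset.mem_range.2 hn)

lemma crossRatioLE_upper_mul_lower {p r s u κ : ℝ} (hp : 0 ≤ p) (hr : 0 ≤ r) (hs : 0 ≤ s)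
    (hu : 0 ≤ u) (hκ : 0 ≤ κ) (h : p ≤ κ * (r * s)) :
    CrossRatioLE (1 + κ) (!![p, r; 0, 1] * !![1, 0; s, u]) := by
  simp only [CrossRatioLE, mul_fin_two, of_apply, cons_val', cons_val_zero, cons_val_one,
    empty_val', cons_val_fin_one]
  constructor
  · nlinarith [mul_le_mul_of_nonneg_right h hu]
  · nlinarith [mul_nonneg (mul_nonneg hκ hp) hu, mul_nonneg (mul_nonneg hκ (mul_nonneg hr hs)) hu,
      mul_nonneg hp hu]

lemma isContractingFamily_upper_mul_lower {α β γ δ κ : ℝ} (hα : 0 < α) (hβ : 0 ≤ β)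
    (hγ : 0 < γ) (hδ : 0 < δ) (hκ : 0 ≤ κ)
    (h : ∀ b c, 1 ≤ b → 1 ≤ c → α ^ b ≤
      κ * ((β * ∑ i ∈ Finset.range b, α ^ i) * (γ * ∑ i ∈ Finset.range c, δ ^ i))) :
    IsContractingFamily (1 + κ) fun b c => !![α, β; 0, 1] ^ b * !![1, 0; γ, δ] ^ c := by
  have hU : !![α, β; 0, 1] ∈ nonnegPosDiag :=
    ⟨fun i j => by fin_cases i <;> fin_cases j <;> simp [hα.le, hβ], by simp [hα], by simp⟩
  have hL : !![1, 0; γ, δ] ∈ nonnegPosDiag :=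
    ⟨fun i j => by fin_cases i <;> fin_cases j <;> simp [hγ.le, hδ.le], by simp, by simp [hδ]⟩
  refine ⟨fun b c => mul_mem (pow_mem hU b) (pow_mem hL c), fun b c hc => ?_,
    fun b c hb hc => ?_⟩
  · rw [upper_pow, lower_pow]
    simpa [mul_fin_two] using mul_pos hγ (geom_sum_pos hδ.le (by omega))
  · rw [upper_pow, lower_pow]
    exact crossRatioLE_upper_mul_lower (by positivity) (by positivity) (by positivity)
      (by positivity) hκ (h b c hb hc)

section QDeformed

/-- `pairPos q b c = σ₁(q)^{-b} σ₂(q)^c`. -/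
noncomputable def pairPos (q : ℝ) (b c : ℕ) : Matrix (Fin 2) (Fin 2) ℝ :=
  !![q, 1; 0, 1] ^ b * !![1, 0; 1, q⁻¹] ^ c

/-- `pairNeg q b c = J σ₁(q)^b σ₂(q)^{-c} J` for `J = reflMat`, see `betaMat_neg_eq`. -/
noncomputable def pairNeg (q : ℝ) (b c : ℕ) : Matrix (Fin 2) (Fin 2) ℝ :=
  !![q⁻¹, q⁻¹; 0, 1] ^ b * !![1, 0; q, q] ^ c

def reflMat : Matrix (Fin 2) (Fin 2) ℝ := !![1, 0; 0, -1]

variable {q : ℝ}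

lemma isContractingFamily_pairPos (hq0 : 0 < q) (hq1 : q ≤ 1) :
    IsContractingFamily (1 + q⁻¹) (pairPos q) := by
  refine isContractingFamily_upper_mul_lower hq0 zero_le_one one_pos (inv_pos.2 hq0)
    (inv_nonneg.2 hq0.le) fun b c hb hc => ?_
  have hsums := one_le_mul_of_one_le_of_one_le (one_le_geom_sum hq0.le hb)
    (one_le_geom_sum (inv_nonneg.2 hq0.le) hc)
  calc q ^ b ≤ 1 := pow_le_one₀ hq0.le hq1
    _ ≤ q⁻¹ := (one_le_inv₀ hq0).2 hq1
    _ ≤ q⁻¹ * ((1 * ∑ i ∈ Finset.range b, q ^ i) * (1 * ∑ i ∈ Finset.range c, q⁻¹ ^ i)) :=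
        le_mul_of_one_le_right (inv_nonneg.2 hq0.le) (by simpa using hsums)

lemma isContractingFamily_pairNeg (hq0 : 0 < q) :
    IsContractingFamily (1 + q⁻¹) (pairNeg q) := by
  refine isContractingFamily_upper_mul_lower (inv_pos.2 hq0) (inv_nonneg.2 hq0.le) hq0 hq0
    (inv_nonneg.2 hq0.le) fun b c hb hc => ?_
  have hlast : q⁻¹ ^ (b - 1) ≤ ∑ i ∈ Finset.range b, q⁻¹ ^ i :=
    Finset.single_le_sum (fun i _ => pow_nonneg (inv_nonneg.2 hq0.le) i)
      (Finset.mem_range.2 (by omega))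
  calc q⁻¹ ^ b = q⁻¹ * q⁻¹ ^ (b - 1) * 1 := by rw [← pow_succ', Nat.sub_add_cancel hb, mul_one]
    _ ≤ q⁻¹ * (∑ i ∈ Finset.range b, q⁻¹ ^ i) * ∑ i ∈ Finset.range c, q ^ i := by
        gcongr
        exact one_le_geom_sum hq0.le hc
    _ = q⁻¹ * ((q⁻¹ * ∑ i ∈ Finset.range b, q⁻¹ ^ i) * (q * ∑ i ∈ Finset.range c, q ^ i)) := by
        field_simp

lemma reflMat_mul_self : reflMat * reflMat = 1 := by
  rw [reflMat, mul_fin_two, one_fin_two]; norm_num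

lemma reflMat_mul_reflMat_mul (M : Matrix (Fin 2) (Fin 2) ℝ) : reflMat * (reflMat * M) = M := by
  rw [← mul_assoc, reflMat_mul_self, one_mul]

lemma reflMat_conj_pow (M : Matrix (Fin 2) (Fin 2) ℝ) (n : ℕ) :
    (reflMat * M * reflMat) ^ n = reflMat * M ^ n * reflMat :=
  Units.conj_pow ⟨reflMat, reflMat, reflMat_mul_self, reflMat_mul_self⟩ M n

lemma mobiusInf_reflMat_conj (M : Matrix (Fin 2) (Fin 2) ℝ) :
    mobiusInf (reflMat * M * reflMat) = -mobiusInf M := by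
  rw [eta_fin_two M, reflMat, mul_fin_two, mul_fin_two, mobiusInf, mobiusInf]
  simp [div_neg]

lemma sig1_zpow_neg_natCast (hq : q ≠ 0) (b : ℕ) :
    sig1 q ^ (-(b : ℤ)) = !![q, 1; 0, 1] ^ b := by
  rw [zpow_neg_natCast, ← inv_pow', inv_eq_left_inv]
  rw [sig1, mul_fin_two, one_fin_two]
  simp [hq]

lemma sig1_zpow_natCast (b : ℕ) :
    sig1 q ^ (b : ℤ) = reflMat * !![q⁻¹, q⁻¹; 0, 1] ^ b * reflMat := by
  rw [zpow_natCast, ← reflMat_conj_pow]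
  congr 1
  rw [sig1, reflMat, mul_fin_two, mul_fin_two]
  simp

lemma sig2_zpow_neg_natCast (hq : q ≠ 0) (c : ℕ) :
    sig2 q ^ (-(c : ℤ)) = reflMat * !![1, 0; q, q] ^ c * reflMat := by
  rw [zpow_neg_natCast, ← inv_pow', inv_eq_left_inv, reflMat_conj_pow]
  rw [sig2, reflMat, mul_fin_two, mul_fin_two, mul_fin_two, one_fin_two]
  simp [hq]

lemma betaMat_two_mul_add_two (q : ℝ) (a : ℕ → ℤ) (j : ℕ) :
    betaMat q a (2 * j + 2) =
      betaMat q a (2 * j) * (sig1 q ^ (-a (2 * j + 1)) * sig2 q ^ a (2 * j + 2)) := by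
  rw [betaMat, betaMat, if_pos (by omega), if_neg (by omega), mul_assoc]

lemma betaMat_eq_pairProd_pairPos (hq : q ≠ 0) {a : ℕ → ℤ} {n : ℕ}
    (ha : ∀ i, 1 ≤ i → i ≤ 2 * n → 0 ≤ a i) :
    betaMat q a (2 * n) = pairProd (pairPos q) (fun i => (a i).toNat) n := by
  induction n with
  | zero => rfl
  | succ n ih =>
    obtain ⟨b, hb⟩ := Int.eq_ofNat_of_zero_le (ha (2 * n + 1) (by omega) (by omega))
    obtain ⟨c, hc⟩ := Int.eq_ofNat_of_zero_le (ha (2 * n + 2) (by omega) (by omega))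
    rw [mul_add, mul_one, betaMat_two_mul_add_two, ih fun i h₁ h₂ => ha i h₁ (by omega),
      pairProd_succ, hb, hc, sig1_zpow_neg_natCast hq, zpow_natCast]
    simp only [Int.toNat_natCast, pairPos, sig2]

lemma betaMat_neg_eq (hq : q ≠ 0) {a : ℕ → ℤ} {n : ℕ}
    (ha : ∀ i, 1 ≤ i → i ≤ 2 * n → 0 ≤ a i) :
    betaMat q (-a) (2 * n) =
      reflMat * pairProd (pairNeg q) (fun i => (a i).toNat) n * reflMat := by
  induction n with
  | zero => simp [betaMat, pairProd, reflMat_mul_self]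
  | succ n ih =>
    obtain ⟨b, hb⟩ := Int.eq_ofNat_of_zero_le (ha (2 * n + 1) (by omega) (by omega))
    obtain ⟨c, hc⟩ := Int.eq_ofNat_of_zero_le (ha (2 * n + 2) (by omega) (by omega))
    rw [mul_add, mul_one, betaMat_two_mul_add_two, ih fun i h₁ h₂ => ha i h₁ (by omega),
      pairProd_succ]
    simp only [Pi.neg_apply, neg_neg, hb, hc, sig1_zpow_natCast, sig2_zpow_neg_natCast hq,
      Int.toNat_natCast, pairNeg, mul_assoc, reflMat_mul_reflMat_mul]

end QDeformed

section ContinuedFraction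

variable {a : ℕ → ℤ} {last : ℕ}

lemma cfVal_of_le {i : ℕ} (h : last ≤ i) : cfVal a last i = a i := by
  rw [cfVal, if_pos h]

lemma cfVal_of_lt {i : ℕ} (h : i < last) : cfVal a last i = a i + 1 / cfVal a last (i + 1) := by
  rw [cfVal, if_neg (not_le.2 h)]

lemma cfVal_neg (a : ℕ → ℤ) (last i : ℕ) : cfVal (-a) last i = -cfVal a last i := by
  by_cases h : last ≤ i
  · rw [cfVal_of_le h, cfVal_of_le h, Pi.neg_apply, Int.cast_neg]
  · rw [cfVal_of_lt (not_le.1 h), cfVal_of_lt (not_le.1 h), cfVal_neg a last (i + 1),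
      Pi.neg_apply, Int.cast_neg, one_div_neg_eq_neg_one_div, neg_add]
termination_by last - i

lemma one_le_cfVal (ha : ∀ j, 2 ≤ j → j ≤ last → 1 ≤ a j) {i : ℕ} (h2 : 2 ≤ i)
    (hi : i ≤ last) : 1 ≤ cfVal a last i := by
  rcases hi.lt_or_eq with hlt | rfl
  · have hai : (1 : ℚ) ≤ a i := by exact_mod_cast ha i h2 hi
    have hc := one_le_cfVal ha (by omega : 2 ≤ i + 1) hlt
    rw [cfVal_of_lt hlt]
    have : 0 < 1 / cfVal a last (i + 1) := one_div_pos.2 (by linarith)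
    linarith
  · rw [cfVal_of_le le_rfl]
    exact_mod_cast ha i h2 le_rfl
termination_by last - i

lemma cfVal_mem_Ioc (ha : ∀ j, 2 ≤ j → j ≤ last → 1 ≤ a j) {i : ℕ} (hi : 1 ≤ i)
    (hlt : i < last) : cfVal a last i ∈ Set.Ioc (a i : ℚ) (a i + 1) := by
  have hc := one_le_cfVal ha (by omega : 2 ≤ i + 1) hlt
  rw [cfVal_of_lt hlt]
  constructor
  · have : 0 < 1 / cfVal a last (i + 1) := one_div_pos.2 (by linarith)
    linarith
  · linarith [(div_le_one (by linarith)).2 hc]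

lemma lt_and_eq_of_cfVal_mem_Ioo (ha : ∀ j, 2 ≤ j → j ≤ last → 1 ≤ a j) {i : ℕ} (hi : 1 ≤ i)
    {z : ℤ} (h : cfVal a last i ∈ Set.Ioo (z : ℚ) (z + 1)) : i < last ∧ a i = z := by
  by_cases hlt : i < last
  · obtain ⟨h₁, h₂⟩ := cfVal_mem_Ioc ha hi hlt
    have : a i < z + 1 := by exact_mod_cast h₁.trans h.2
    have : z < a i + 1 := by exact_mod_cast h.1.trans_le h₂
    exact ⟨hlt, by omega⟩
  · rw [cfVal_of_le (not_lt.1 hlt)] at h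
    have : z < a i := by exact_mod_cast h.1
    have : a i < z + 1 := by exact_mod_cast h.2
    omega

lemma cfVal_pos (h1 : 0 ≤ a 1) (ha : ∀ j, 2 ≤ j → j ≤ last → 1 ≤ a j) (hlast : 1 < last) :
    0 < cfVal a last 1 :=
  lt_of_le_of_lt (by exact_mod_cast h1) (cfVal_mem_Ioc ha le_rfl hlast).1

end ContinuedFraction

section ECF

variable {n : ℕ} {a : ℕ → ℤ} {x : ℚ}

lemma IsECFExp.neg (h : IsECFExp n a x) (hx : x ≠ 0) : IsECFExp n (-a) (-x) := by
  rcases h with ⟨-, ⟨hn, hform⟩, hval⟩ | ⟨rfl, -⟩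
  · refine Or.inl ⟨neg_ne_zero.2 hx, ⟨hn, ?_⟩, by rw [cfVal_neg, hval]⟩
    simp only [Pi.neg_apply]
    rcases hform with ⟨h₁, h₂⟩ | ⟨h₁, h₂⟩
    · exact Or.inr ⟨by omega, fun i hi hi' => by linarith [h₂ i hi hi']⟩
    · exact Or.inl ⟨by omega, fun i hi hi' => by linarith [h₂ i hi hi']⟩
  · exact absurd rfl hx

lemma IsECFExp.posForm_of_pos (h : IsECFExp n a x) (hx : 0 < x) :
    (∀ i, 1 ≤ i → i ≤ 2 * n → 0 ≤ a i) ∧ (∀ i, 2 ≤ i → i ≤ 2 * n → 1 ≤ a i) ∧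
      cfVal a (2 * n) 1 = x := by
  rcases h with ⟨-, ⟨hn, ⟨h₁, h₂⟩ | ⟨h₁, h₂⟩⟩, hval⟩ | ⟨rfl, -⟩
  · refine ⟨fun i hi hi' => ?_, h₂, hval⟩
    rcases hi.eq_or_lt with rfl | hi
    · exact h₁
    · linarith [h₂ i hi hi']
  · have := cfVal_pos (a := -a) (by simpa using h₁)
      (fun i hi hi' => by simpa using (by linarith [h₂ i hi hi'] : (1 : ℤ) ≤ -a i))
      (by omega : 1 < 2 * n)
    rw [cfVal_neg, hval] at this
    linarith
  · exact absurd hx (lt_irrefl 0)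

end ECF

noncomputable def completeQuot (t : ℝ) : ℕ → ℝ
  | 0 => t
  | k + 1 => (Int.fract (completeQuot t k))⁻¹

lemma Irrational.completeQuot {t : ℝ} (ht : Irrational t) (k : ℕ) :
    Irrational (completeQuot t k) := by
  induction k with
  | zero => exact ht
  | succ k ih => exact (ih.sub_intCast ⌊_⌋).inv

lemma one_le_floor_completeQuot {t : ℝ} (ht : Irrational t) (k : ℕ) :
    1 ≤ ⌊completeQuot t (k + 1)⌋ := by
  have hfract := Int.fract_pos.2 fun h => (ht.completeQuot k).ne_int _ h
  exact Int.le_floor.2 (by exact_mod_cast (one_le_inv₀ hfract).2 (Int.fract_lt_one _).le)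

theorem eventually_digits_eq_and_tendsto_cfVal {t : ℝ} (ht : Irrational t)
    {A : ℕ → ℕ → ℤ} {last : ℕ → ℕ}
    (hA : ∀ᶠ m in atTop, ∀ i, 2 ≤ i → i ≤ last m → 1 ≤ A m i)
    (hx : Tendsto (fun m => (cfVal (A m) (last m) 1 : ℝ)) atTop (𝓝 t)) (k : ℕ) :
    (∀ᶠ m in atTop, k ≤ last m ∧ ∀ i, 1 ≤ i → i ≤ k → A m i = ⌊completeQuot t (i - 1)⌋) ∧
      Tendsto (fun m => (cfVal (A m) (last m) (k + 1) : ℝ)) atTop (𝓝 (completeQuot t k)) := by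
  induction k with
  | zero => exact ⟨.of_forall fun m => ⟨Nat.zero_le _, fun i h₁ h₂ => absurd h₂ (by omega)⟩, hx⟩
  | succ k ih =>
    obtain ⟨hdig, hτ⟩ := ih
    set T := completeQuot t k
    have hT : T ∈ Set.Ioo (⌊T⌋ : ℝ) (⌊T⌋ + 1) :=
      ⟨(Int.floor_le T).lt_of_ne fun h => (ht.completeQuot k).ne_int _ h.symm,
        Int.lt_floor_add_one T⟩
    have hnext : ∀ᶠ m in atTop, k + 1 < last m ∧ A m (k + 1) = ⌊T⌋ ∧
        ((cfVal (A m) (last m) (k + 1) : ℝ) - ⌊T⌋)⁻¹ = cfVal (A m) (last m) (k + 1 + 1) := by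
      filter_upwards [hA, hτ.eventually (Ioo_mem_nhds hT.1 hT.2)] with m hAm hmem
      obtain ⟨hlt, heq⟩ := lt_and_eq_of_cfVal_mem_Ioo hAm (Nat.le_add_left 1 k)
        ⟨by exact_mod_cast hmem.1, by exact_mod_cast hmem.2⟩
      refine ⟨hlt, heq, ?_⟩
      rw [cfVal_of_lt hlt, heq]
      push_cast
      simp
    refine ⟨?_, ?_⟩
    · filter_upwards [hdig, hnext] with m ⟨_, hdm⟩ ⟨hlt, heq, _⟩
      refine ⟨hlt.le, fun i h₁ h₂ => ?_⟩
      rcases h₂.lt_or_eq with h₂ | rfl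
      · exact hdm i h₁ (by omega)
      · simpa using heq
    · exact ((hτ.sub_const _).inv₀ (sub_ne_zero.2 hT.1.ne')).congr'
        (hnext.mono fun m hm => hm.2.2)

theorem IsContractingFamily.exists_tendsto_of_tendsto_cfVal {K : ℝ}
    {M : ℕ → ℕ → Matrix (Fin 2) (Fin 2) ℝ} (hM : IsContractingFamily K M) (hK : 1 < K)
    {t : ℝ} (ht : Irrational t) :
    ∃ L, ∀ (x : ℕ → ℚ) (n : ℕ → ℕ) (A : ℕ → ℕ → ℤ),
      Tendsto (fun m => (x m : ℝ)) atTop (𝓝 t) →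
      (∀ᶠ m in atTop, (∀ i, 2 ≤ i → i ≤ 2 * n m → 1 ≤ A m i) ∧ cfVal (A m) (2 * n m) 1 = x m) →
      Tendsto (fun m => mobiusInf (pairProd M (fun i => (A m i).toNat) (n m))) atTop (𝓝 L) := by
  obtain ⟨L, hL⟩ := hM.exists_tendsto_mobiusInf_pairProd hK
    (d := fun i => (⌊completeQuot t (i - 1)⌋).toNat) fun i hi => by
      have := one_le_floor_completeQuot ht (i - 2)
      rw [show i - 2 + 1 = i - 1 by omega] at this
      omega
  refine ⟨L, fun x n A hx hA => hL _ n fun k => ?_⟩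
  have hval : Tendsto (fun m => (cfVal (A m) (2 * n m) 1 : ℝ)) atTop (𝓝 t) :=
    hx.congr' (hA.mono fun m hm => by simp only [hm.2])
  filter_upwards [(eventually_digits_eq_and_tendsto_cfVal ht (hA.mono fun m hm => hm.1) hval
    (2 * k)).1] with m ⟨hk, hdig⟩
  exact ⟨by omega, fun i h₁ h₂ => by rw [hdig i h₁ h₂]⟩

/-- limits of right q-deformed rationals at irrational points:
for 0 < q < 1 and irrational t there is a single real L such that for every sequence of
rationals xₘ → t (with expansion data (n m, A m) for each xₘ), [xₘ]♯_q → L. -/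
theorem sharp_limit_at_irrational (q : ℝ) (hq0 : 0 < q) (hq1 : q < 1)
    (t : ℝ) (ht : Irrational t) :
    ∃ L : ℝ, ∀ (x : ℕ → ℚ) (n : ℕ → ℕ) (A : ℕ → ℕ → ℤ),
      Tendsto (fun m => (x m : ℝ)) atTop (nhds t) →
      (∀ m, IsECFExp (n m) (A m) (x m)) →
      Tendsto (fun m => sharpVal q (n m) (A m)) atTop (nhds L) := by
  have hK : 1 < 1 + q⁻¹ := lt_add_of_pos_right 1 (inv_pos.2 hq0)
  rcases ht.ne_zero.lt_or_gt with htneg | htpos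
  · obtain ⟨L, hL⟩ :=
      (isContractingFamily_pairNeg hq0).exists_tendsto_of_tendsto_cfVal hK ht.neg
    refine ⟨-L, fun x n A hx hexp => ?_⟩
    have hform := (hx.eventually (gt_mem_nhds htneg)).mono fun m hm =>
      have hm : x m < 0 := by exact_mod_cast hm
      ((hexp m).neg hm.ne).posForm_of_pos (neg_pos.2 hm)
    refine (hL (-x) n (-A) (by simpa using hx.neg) (hform.mono fun m hm => hm.2)).neg.congr' ?_
    filter_upwards [hform] with m hm
    rw [sharpVal, ← neg_neg (A m), betaMat_neg_eq hq0.ne' hm.1, mobiusInf_reflMat_conj]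
    rfl
  · obtain ⟨L, hL⟩ :=
      (isContractingFamily_pairPos hq0 hq1.le).exists_tendsto_of_tendsto_cfVal hK ht
    refine ⟨L, fun x n A hx hexp => ?_⟩
    have hform := (hx.eventually (lt_mem_nhds htpos)).mono fun m hm =>
      (hexp m).posForm_of_pos (by exact_mod_cast hm)
    refine (hL x n A hx (hform.mono fun m hm => hm.2)).congr' ?_
    filter_upwards [hform] with m hm
    rw [sharpVal, betaMat_eq_pairProd_pairPos hq0.ne' hm.1]
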